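/- arXiv:2506.23262 — 6 statements merged into one kernel-verified Lean document; each statement's English description precedes it below -/
import Mathlib

section
/- Let ρ be a separable density matrix on ℂ^d ⊗ ℂ^d, i.e. ρ = Σ_k p_k |a_k⟩⟨a_k| ⊗ |b_k⟩⟨b_k| with p_k ≥ 0 summing to 1. Then the d×d matrix Δ_T(ρ) with entries [Δ_T(ρ)]_{ij} = (1/2)(ρ_{ij,ji} + ρ_{ji,ij}) is positive semidefinite. -/
open Matrix ComplexOrder

/-- The pure product state `|a⟩⟨a| ⊗ |b⟩⟨b|` as a matrix on `ℂ^d ⊗ ℂ^d`. -/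
noncomputable def prodState {d : ℕ} (a b : Fin d → ℂ) :
    Matrix (Fin d × Fin d) (Fin d × Fin d) ℂ :=
  fun p q => a p.1 * star (a q.1) * (b p.2 * star (b q.2))

/-- A separable state: a convex combination of pure product states. -/
noncomputable def Separable {d : ℕ}
    (ρ : Matrix (Fin d × Fin d) (Fin d × Fin d) ℂ) : Prop :=
  ∃ (n : ℕ) (p : Fin n → ℝ) (a b : Fin n → Fin d → ℂ),
    (∀ k, 0 ≤ p k) ∧ ∑ k, p k = 1 ∧
    ρ = ∑ k, (p k : ℂ) • prodState (a k) (b k)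

/-- The matrix `Δ_T(ρ)` with entries `(1/2)(ρ_{ij,ji} + ρ_{ji,ij})`. -/
noncomputable def DeltaT {d : ℕ} (ρ : Matrix (Fin d × Fin d) (Fin d × Fin d) ℂ) :
    Matrix (Fin d) (Fin d) ℂ :=
  fun i j => (1/2 : ℂ) * (ρ (i, j) (j, i) + ρ (j, i) (i, j))

lemma posSemidef_zero' {m : Type*} [Fintype m] : (0 : Matrix m m ℂ).PosSemidef := by
  constructor
  · simp [Matrix.IsHermitian]
  · intro x; simp

lemma posSemidef_smul' {m : Type*} [Fintype m] {M : Matrix m m ℂ} (hM : M.PosSemidef)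
    {c : ℝ} (hc : 0 ≤ c) : ((c : ℂ) • M).PosSemidef := by
  rw [Matrix.posSemidef_iff_dotProduct_mulVec]
  constructor
  · unfold Matrix.IsHermitian
    rw [Matrix.conjTranspose_smul, hM.1.eq]
    simp
  · intro x
    rw [Matrix.smul_mulVec, dotProduct_smul]
    have := hM.dotProduct_mulVec_nonneg x
    rw [smul_eq_mul]
    calc (0:ℂ) = (c:ℂ) * 0 := by ring
    _ ≤ (c:ℂ) * (dotProduct (star x) (M.mulVec x)) := by
        apply mul_le_mul_of_nonneg_left this
        exact_mod_cast hc

lemma posSemidef_vecMulVec' {m : Type*} [Fintype m] (v : m → ℂ) :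
    (Matrix.vecMulVec v (star v)).PosSemidef := by
  have h : Matrix.vecMulVec v (star v) =
      (Matrix.replicateCol (Fin 1) v) * (Matrix.replicateCol (Fin 1) v)ᴴ := by
    ext i j
    simp [Matrix.vecMulVec, Matrix.mul_apply, Matrix.replicateCol, Matrix.conjTranspose_apply]
  rw [h]
  exact Matrix.posSemidef_self_mul_conjTranspose _

lemma deltaT_prod {d : ℕ} (a b : Fin d → ℂ) :
    DeltaT (prodState a b) =
      (1/2 : ℂ) • (Matrix.vecMulVec (fun i => a i * star (b i))
          (star fun i => a i * star (b i)) +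
        (Matrix.vecMulVec (fun i => a i * star (b i))
          (star fun i => a i * star (b i)))ᵀ) := by
  ext i j
  simp only [DeltaT, prodState, Matrix.smul_apply, Matrix.add_apply, Matrix.transpose_apply,
    Matrix.vecMulVec_apply, Pi.star_apply, smul_eq_mul]
  simp [star_mul']
  ring

lemma posSemidef_deltaT_prod {d : ℕ} (a b : Fin d → ℂ) :
    (DeltaT (prodState a b)).PosSemidef := by
  rw [deltaT_prod]
  have h1 := posSemidef_vecMulVec' (fun i => a i * star (b i))
  have h2 := h1.transpose
  have h3 := h1.add h2
  have : ((1:ℝ)/2 : ℂ) = (1/2 : ℂ) := by norm_num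
  simpa [this] using posSemidef_smul' h3 (by norm_num : (0:ℝ) ≤ 1/2)

theorem stmt1 (d : ℕ) (ρ : Matrix (Fin d × Fin d) (Fin d × Fin d) ℂ)
    (hρ : Separable ρ) : (DeltaT ρ).PosSemidef := by
  obtain ⟨n, p, a, b, hp, _, rfl⟩ := hρ
  have hlin : DeltaT (∑ k, (p k : ℂ) • prodState (a k) (b k)) =
      ∑ k, (p k : ℂ) • DeltaT (prodState (a k) (b k)) := by
    ext i j
    simp only [DeltaT, Matrix.sum_apply, Matrix.smul_apply, smul_eq_mul,
      Finset.mul_sum, Finset.sum_add_distrib]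
    rw [← Finset.sum_add_distrib, Finset.mul_sum]
    exact Finset.sum_congr rfl fun k _ => by ring
  rw [hlin]
  induction (Finset.univ : Finset (Fin n)) using Finset.induction_on with
  | empty => simpa using posSemidef_zero'
  | insert _ _ hk ih =>
    rw [Finset.sum_insert hk]
    exact (posSemidef_smul' (posSemidef_deltaT_prod _ _) (hp _)).add ih
end

section
/- For any separable two-qubit density matrix ρ (with entries ρ_{ij,kl} in the computational product basis), one has ρ_{00,00} ρ_{11,11} ≥ (Re ρ_{01,10})^2. -/
open Matrix ComplexOrder

theorem stmt2 (ρ : Matrix (Fin 2 × Fin 2) (Fin 2 × Fin 2) ℂ)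
    (hρ : Separable ρ) :
    ((ρ (0, 1) (1, 0)).re) ^ 2 ≤ (ρ (0, 0) (0, 0)).re * (ρ (1, 1) (1, 1)).re := by
  obtain ⟨n, p, a, b, hp, -, rfl⟩ := hρ
  simp only [Matrix.sum_apply, Matrix.smul_apply, smul_eq_mul, prodState, Complex.re_sum]
  set f : Fin n → ℝ := fun k => Real.sqrt (p k) * (‖a k 0‖ * ‖b k 0‖) with hf
  set g : Fin n → ℝ := fun k => Real.sqrt (p k) * (‖a k 1‖ * ‖b k 1‖) with hg
  have hCS := Finset.sum_mul_sq_le_sq_mul_sq Finset.univ f g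
  have hdiag : ∀ (i : Fin 2) (k), ((p k : ℂ) * (a k i * star (a k i) * (b k i * star (b k i)))).re
      = (Real.sqrt (p k) * (‖a k i‖ * ‖b k i‖)) ^ 2 := by
    intro i k
    simp only [Complex.star_def, Complex.mul_conj]
    rw [mul_pow, mul_pow, Real.sq_sqrt (hp k), Complex.sq_norm, Complex.sq_norm]
    ring_nf
    simp [Complex.ofReal_re, Complex.normSq]
  have hmid : ∀ k, |((p k : ℂ) * (a k 0 * star (a k 1) * (b k 1 * star (b k 0)))).re| ≤ f k * g k := by
    intro k
    refine le_trans (Complex.abs_re_le_norm _) ?_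
    simp only [Complex.star_def, norm_mul, Complex.norm_of_nonneg (hp k), Complex.norm_conj, abs_of_nonneg (hp k), hf, hg]
    have : Real.sqrt (p k) * Real.sqrt (p k) = p k := Real.mul_self_sqrt (hp k)
    apply le_of_eq
    rw [show Real.sqrt (p k) * (‖a k 0‖ * ‖b k 0‖) *
        (Real.sqrt (p k) * (‖a k 1‖ * ‖b k 1‖)) =
        Real.sqrt (p k) * Real.sqrt (p k) * (‖a k 0‖ * ‖b k 0‖ *
        (‖a k 1‖ * ‖b k 1‖)) from by ring, this]
    ring
  have habs : |∑ k, ((p k : ℂ) * (a k 0 * star (a k 1) * (b k 1 * star (b k 0)))).re| ≤ ∑ k, f k * g k :=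
    (Finset.abs_sum_le_sum_abs _ _).trans (Finset.sum_le_sum fun k _ => hmid k)
  obtain ⟨h1, h2⟩ := abs_le.mp habs
  calc (∑ k, ((p k : ℂ) * (a k 0 * star (a k 1) * (b k 1 * star (b k 0)))).re) ^ 2
      ≤ (∑ k, f k * g k) ^ 2 := sq_le_sq' h1 h2
    _ ≤ (∑ k, f k ^ 2) * ∑ k, g k ^ 2 := hCS
    _ = _ := by rw [Finset.sum_congr rfl fun k _ => (hdiag 0 k).symm,
                    Finset.sum_congr rfl fun k _ => (hdiag 1 k).symm]
end

section
/- For any separable two-qubit density matrix ρ, one has ρ_{01,01} ρ_{10,10} ≥ (Re ρ_{00,11})^2. -/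
open Matrix ComplexOrder

theorem stmt3 (ρ : Matrix (Fin 2 × Fin 2) (Fin 2 × Fin 2) ℂ)
    (hρ : Separable ρ) :
    ((ρ (0, 0) (1, 1)).re) ^ 2 ≤ (ρ (0, 1) (0, 1)).re * (ρ (1, 0) (1, 0)).re := by
  obtain ⟨n, p, a, b, hp, -, rfl⟩ := hρ
  have entry : ∀ i j, ((∑ k, (p k : ℂ) • prodState (a k) (b k)) i j).re
      = ∑ k, (p k * (prodState (a k) (b k) i j).re) := by
    intro i j
    rw [Matrix.sum_apply, Complex.re_sum]
    refine Finset.sum_congr rfl fun k _ => ?_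
    simp [Complex.mul_re]
  rw [entry, entry, entry]
  set F : Fin n → ℝ := fun k =>
    Real.sqrt (p k * (Complex.normSq (a k 0) * Complex.normSq (b k 1))) with hF
  set G : Fin n → ℝ := fun k =>
    Real.sqrt (p k * (Complex.normSq (a k 1) * Complex.normSq (b k 0))) with hG
  have h1 : ∀ k, p k * (prodState (a k) (b k) (0,1) (0,1)).re = F k ^ 2 := by
    intro k
    rw [hF]
    rw [Real.sq_sqrt (mul_nonneg (hp k) (mul_nonneg (Complex.normSq_nonneg _) (Complex.normSq_nonneg _)))]
    simp only [prodState, Complex.star_def, Complex.mul_conj]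
    ring_nf
    simp [Complex.ofReal_mul]
    ring
  have h2 : ∀ k, p k * (prodState (a k) (b k) (1,0) (1,0)).re = G k ^ 2 := by
    intro k
    rw [hG]
    rw [Real.sq_sqrt (mul_nonneg (hp k) (mul_nonneg (Complex.normSq_nonneg _) (Complex.normSq_nonneg _)))]
    simp only [prodState, Complex.star_def, Complex.mul_conj]
    ring_nf
    simp [Complex.ofReal_mul]
    ring
  rw [Finset.sum_congr rfl fun k _ => h1 k, Finset.sum_congr rfl fun k _ => h2 k]
  have key2 : |∑ k, p k * (prodState (a k) (b k) (0,0) (1,1)).re| ≤ ∑ k, F k * G k := by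
    refine (Finset.abs_sum_le_sum_abs _ _).trans (Finset.sum_le_sum fun k _ => ?_)
    rw [abs_mul, abs_of_nonneg (hp k)]
    calc p k * |(prodState (a k) (b k) (0,0) (1,1)).re|
        ≤ p k * ‖prodState (a k) (b k) (0,0) (1,1)‖ :=
          mul_le_mul_of_nonneg_left (Complex.abs_re_le_norm _) (hp k)
      _ = F k * G k := by
          rw [Complex.norm_def,
            show p k = Real.sqrt (p k ^ 2) from (Real.sqrt_sq (hp k)).symm,
            ← Real.sqrt_mul (sq_nonneg _)]
          simp only [hF, hG]
          rw [← Real.sqrt_mul (mul_nonneg (hp k) (mul_nonneg (Complex.normSq_nonneg _) (Complex.normSq_nonneg _)))]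
          congr 1
          simp only [prodState, Complex.star_def, Complex.normSq_mul, Complex.normSq_conj]
          ring
  calc (∑ k, p k * (prodState (a k) (b k) (0,0) (1,1)).re) ^ 2
      ≤ (∑ k, F k * G k) ^ 2 := by
        rw [← sq_abs]
        exact pow_le_pow_left₀ (abs_nonneg _) key2 2
    _ ≤ (∑ k, F k ^ 2) * ∑ k, G k ^ 2 := Finset.sum_mul_sq_le_sq_mul_sq _ _ _
end

section
/- Let Λ: M_d(ℂ) → M_d(ℂ) be a positive linear map preserving Hermiticity, and ρ a separable state on ℂ^d ⊗ ℂ^d. Then the matrix Δ_Λ(ρ) with entries (Δ_Λ(ρ))_{ij} = Σ_{l,m} Re(ρ_{il,jm} (Λ†)_{ml,ji}) is positive semidefinite, where (Λ†)_{ml,ij} = ⟨f_m| Λ†(|e'_i⟩⟨e'_j|) |f_l⟩ and Λ† is the adjoint of Λ with respect to the Hilbert–Schmidt inner product. -/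
open Matrix ComplexOrder

lemma aux_posSemidef_outer {d : ℕ} (b : Fin d → ℂ) :
    (Matrix.of (fun m l => b m * star (b l)) : Matrix (Fin d) (Fin d) ℂ).PosSemidef := by
  rw [Matrix.posSemidef_iff_dotProduct_mulVec]
  constructor
  · ext i j; simp [conjTranspose_apply, mul_comm]
  · intro x
    have : star x ⬝ᵥ (Matrix.of (fun m l => b m * star (b l)) : Matrix (Fin d) (Fin d) ℂ) *ᵥ x
        = (∑ i, star (x i) * b i) * star (∑ i, star (x i) * b i) := by
      simp [dotProduct, mulVec, Finset.sum_mul, Finset.mul_sum, mul_comm, mul_left_comm, mul_assoc]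
      rw [Finset.sum_comm]
    rw [this]
    exact mul_star_self_nonneg _

lemma aux_triple_swap {α : Type*} [AddCommMonoid α] {d n : ℕ} (f : Fin d → Fin d → Fin n → α) :
    ∑ l, ∑ m, ∑ k, f l m k = ∑ k, ∑ l, ∑ m, f l m k := by
  rw [show ∑ l, ∑ m, ∑ k, f l m k = ∑ l, ∑ k, ∑ m, f l m k from
    Finset.sum_congr rfl fun l _ => Finset.sum_comm]
  exact Finset.sum_comm

theorem stmt12 (d : ℕ)
    (Λ Λadj : Matrix (Fin d) (Fin d) ℂ →ₗ[ℂ] Matrix (Fin d) (Fin d) ℂ)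
    (hΛpos : ∀ X : Matrix (Fin d) (Fin d) ℂ, X.PosSemidef → (Λ X).PosSemidef)
    (hΛherm : ∀ X : Matrix (Fin d) (Fin d) ℂ, X.IsHermitian → (Λ X).IsHermitian)
    (hadj : ∀ X Y : Matrix (Fin d) (Fin d) ℂ,
      (Xᴴ * Λ Y).trace = ((Λadj X)ᴴ * Y).trace)
    (ρ : Matrix (Fin d × Fin d) (Fin d × Fin d) ℂ) (hρ : Separable ρ)
    (Δ : Matrix (Fin d) (Fin d) ℝ)
    (hΔ : ∀ i j, Δ i j = ∑ l, ∑ m,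
      (ρ (i, l) (j, m) * (Λadj (Matrix.single j i 1)) m l).re) :
    Δ.PosSemidef := by
  obtain ⟨n, p, a, b, hp, hsum, hρeq⟩ := hρ
  set Y : Fin n → Matrix (Fin d) (Fin d) ℂ :=
    fun k => Matrix.of (fun m l => b k m * star (b k l)) with hYdef
  set C : Fin n → Matrix (Fin d) (Fin d) ℂ := fun k => Λ (Y k) with hCdef
  have hCpos : ∀ k, (C k).PosSemidef := fun k => hΛpos _ (aux_posSemidef_outer (b k))
  -- key: inner double sum equals conj of (C k) j i, which is (C k) i j
  have hkey : ∀ i j k, (∑ l, ∑ m, b k l * star (b k m)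
      * (Λadj (Matrix.single j i 1)) m l) = C k i j := by
    intro i j k
    have h := hadj (Matrix.single j i 1) (Y k)
    have hL : ((Matrix.single j i 1)ᴴ * Λ (Y k)).trace = C k j i := by
      simp [Matrix.trace, Matrix.mul_apply, Matrix.single, Matrix.diag,
        conjTranspose_apply, ite_and, Finset.sum_ite_eq, apply_ite, hCdef]
    have hR : ((Λadj (Matrix.single j i 1))ᴴ * Y k).trace =
        ∑ l, ∑ m, star ((Λadj (Matrix.single j i 1)) m l) * (b k m * star (b k l)) := by
      simp only [Matrix.trace, Matrix.mul_apply, Matrix.diag, conjTranspose_apply,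
        Matrix.of_apply, hYdef]
    have h2 : C k j i = ∑ l, ∑ m,
        star ((Λadj (Matrix.single j i 1)) m l) * (b k m * star (b k l)) := by
      rw [← hL, ← hR, h]
    have h3 := congrArg (starRingEnd ℂ) h2
    simp only [map_sum] at h3
    rw [← (hCpos k).1.apply i j]
    rw [show (star (C k j i) : ℂ) = (starRingEnd ℂ) (C k j i) from rfl, h3]
    refine Finset.sum_congr rfl fun l _ => Finset.sum_congr rfl fun m _ => ?_
    simp only [_root_.map_mul, starRingEnd_apply, star_star, star_mul']
    ring
  -- entrywise formula for Δ
  have hΔ' : ∀ i j, Δ i j = ∑ k, p k * ((a k i) * star (a k j) * C k i j).re := by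
    intro i j
    rw [hΔ i j]
    have hρap : ∀ l m, ρ (i, l) (j, m) = ∑ k, (p k : ℂ) *
        (a k i * star (a k j) * (b k l * star (b k m))) := by
      intro l m
      rw [hρeq]
      simp [prodState, Matrix.sum_apply, Matrix.smul_apply, smul_eq_mul]
    calc ∑ l, ∑ m, (ρ (i, l) (j, m) * (Λadj (Matrix.single j i 1)) m l).re
        = ∑ l, ∑ m, ∑ k, p k * ((a k i * star (a k j)) *
            (b k l * star (b k m) * (Λadj (Matrix.single j i 1)) m l)).re := by
          refine Finset.sum_congr rfl fun l _ => Finset.sum_congr rfl fun m _ => ?_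
          rw [hρap l m, Finset.sum_mul, Complex.re_sum]
          refine Finset.sum_congr rfl fun k _ => ?_
          rw [show (p k : ℂ) * (a k i * star (a k j) * (b k l * star (b k m))) *
                (Λadj (Matrix.single j i 1)) m l
              = (p k : ℂ) * ((a k i * star (a k j)) *
                (b k l * star (b k m) * (Λadj (Matrix.single j i 1)) m l)) by ring]
          rw [Complex.re_ofReal_mul]
      _ = ∑ k, p k * ((a k i * star (a k j)) * C k i j).re := by
          rw [aux_triple_swap]
          refine Finset.sum_congr rfl fun k _ => ?_
          simp only [← Finset.mul_sum]
          congr 1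
          conv_rhs => rw [← hkey i j k, Finset.mul_sum]
          rw [Complex.re_sum]
          refine Finset.sum_congr rfl fun l _ => ?_
          rw [Finset.mul_sum, Complex.re_sum]
  rw [Matrix.posSemidef_iff_dotProduct_mulVec]
  constructor
  · ext i j
    simp only [conjTranspose_apply, star_trivial, transpose_apply]
    rw [hΔ' i j, hΔ' j i]
    refine Finset.sum_congr rfl fun k _ => ?_
    congr 1
    rw [← Complex.conj_re (a k i * star (a k j) * C k i j)]
    congr 1
    simp only [_root_.map_mul, starRingEnd_apply, star_star, star_mul']
    rw [show (star (C k i j) : ℂ) = C k j i from by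
      rw [← (hCpos k).1.apply j i]]
    ring
  · intro x
    have hterm : ∀ k, 0 ≤ p k * (star (fun i => (x i : ℂ) * star (a k i)) ⬝ᵥ
        C k *ᵥ (fun i => (x i : ℂ) * star (a k i))).re := by
      intro k
      exact mul_nonneg (hp k) (Complex.le_def.mp ((hCpos k).dotProduct_mulVec_nonneg _) |>.1)
    have hquad : star x ⬝ᵥ Δ *ᵥ x = ∑ k, p k * (star (fun i => (x i : ℂ) * star (a k i)) ⬝ᵥ
        C k *ᵥ (fun i => (x i : ℂ) * star (a k i))).re := by
      simp only [dotProduct, mulVec, Pi.star_apply, star_trivial]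
      calc ∑ i, x i * ∑ j, Δ i j * x j
          = ∑ i, ∑ j, ∑ k, p k * (((x i : ℂ) * a k i) * ((x j : ℂ) * star (a k j)) * C k i j).re := by
            refine Finset.sum_congr rfl fun i _ => ?_
            rw [Finset.mul_sum]
            refine Finset.sum_congr rfl fun j _ => ?_
            rw [hΔ' i j, Finset.sum_mul, Finset.mul_sum]
            refine Finset.sum_congr rfl fun k _ => ?_
            rw [show x i * (p k * (a k i * star (a k j) * C k i j).re * x j)
                = p k * (x i * x j * (a k i * star (a k j) * C k i j).re) by ring]
            congr 1
            rw [show x i * x j * (a k i * star (a k j) * C k i j).re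
                = (((x i * x j : ℝ) : ℂ) * (a k i * star (a k j) * C k i j)).re by
              rw [Complex.re_ofReal_mul]]
            congr 1
            push_cast
            ring
        _ = _ := by
            rw [aux_triple_swap]
            refine Finset.sum_congr rfl fun k _ => ?_
            congr 1
            have hexp : (∑ i, star ((x i : ℂ) * star (a k i)) *
                ∑ j, C k i j * ((x j : ℂ) * star (a k j)))
                = ∑ i, ∑ j, ((x i : ℂ) * a k i) * ((x j : ℂ) * star (a k j)) * C k i j := by
              refine Finset.sum_congr rfl fun i _ => ?_
              rw [Finset.mul_sum]
              refine Finset.sum_congr rfl fun j _ => ?_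
              simp only [star_mul', star_star, Complex.star_def, Complex.conj_ofReal,
                Complex.conj_conj]
              ring
            rw [hexp]
            simp only [Complex.re_sum, Finset.mul_sum]
    rw [hquad]
    exact Finset.sum_nonneg fun k _ => hterm k
end

section
/- If the k×k matrix Δ_T(ρ) (with entries [Δ_T(ρ)]_{ij} = (1/2)(ρ_{ij,ji}+ρ_{ji,ij})) is positive semidefinite, then Tr(W_T(p) ρ) ≥ 0 for every choice of Schmidt probabilities p_i > 0 with Σp_i = 1; conversely, if Δ_T(ρ) has a negative eigenvalue with an eigenvector having all nonnegative entries, then there exists p with Tr(W_T(p) ρ) < 0. In particular the nonlinear criterion Δ_T(ρ) ≥ 0 dominates the entire family of linear witnesses {W_T(p)} in the positive orthant. -/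
open Matrix ComplexOrder

/-- Rank-one projector `|v⟩⟨v|`. -/
noncomputable def outer {n : Type*} (v : n → ℂ) : Matrix n n ℂ :=
  fun p q => v p * star (v q)

/-- Bell state `|φ⁺⟩ = (|00⟩ + |11⟩)/√2`. -/
noncomputable def phiP : Fin 2 × Fin 2 → ℂ :=
  fun q => if q = (0, 0) then (Real.sqrt 2)⁻¹ else if q = (1, 1) then (Real.sqrt 2)⁻¹ else 0

/-- Bell state `|φ⁻⟩ = (|00⟩ − |11⟩)/√2`. -/
noncomputable def phiM : Fin 2 × Fin 2 → ℂ :=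
  fun q => if q = (0, 0) then (Real.sqrt 2)⁻¹ else if q = (1, 1) then -(Real.sqrt 2)⁻¹ else 0

/-- Bell state `|ψ⁺⟩ = (|01⟩ + |10⟩)/√2`. -/
noncomputable def psiP : Fin 2 × Fin 2 → ℂ :=
  fun q => if q = (0, 1) then (Real.sqrt 2)⁻¹ else if q = (1, 0) then (Real.sqrt 2)⁻¹ else 0

/-- Bell state `|ψ⁻⟩ = (|01⟩ − |10⟩)/√2`. -/
noncomputable def psiM : Fin 2 × Fin 2 → ℂ :=
  fun q => if q = (0, 1) then (Real.sqrt 2)⁻¹ else if q = (1, 0) then -(Real.sqrt 2)⁻¹ else 0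

/-- Partial transposition on the second factor: `(ρ^Γ)_{ij,kl} = ρ_{il,kj}`. -/
noncomputable def PT {d : ℕ} (ρ : Matrix (Fin d × Fin d) (Fin d × Fin d) ℂ) :
    Matrix (Fin d × Fin d) (Fin d × Fin d) ℂ :=
  fun p q => ρ (p.1, q.2) (q.1, p.2)

/-- The Schmidt-form vector `|ψ(p)⟩ = Σ_i √p_i |e_i, f_i⟩` (full Schmidt rank `k`). -/
noncomputable def psiS {k : ℕ} (p : Fin k → ℝ) : Fin k × Fin k → ℂ :=
  fun q => if q.1 = q.2 then ((Real.sqrt (p q.1) : ℝ) : ℂ) else 0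

theorem stmt17 (k : ℕ) (ρ : Matrix (Fin k × Fin k) (Fin k × Fin k) ℂ)
    (hρ : ρ.IsHermitian) (Δ : Matrix (Fin k) (Fin k) ℝ)
    (hΔ : ∀ i j, Δ i j = ((1/2 : ℂ) * (ρ (i, j) (j, i) + ρ (j, i) (i, j))).re) :
    (Δ.PosSemidef →
      ∀ p : Fin k → ℝ, (∀ i, 0 < p i) → ∑ i, p i = 1 →
        0 ≤ ((PT (outer (psiS p)) * ρ).trace).re) ∧
    ((∃ μ : ℝ, μ < 0 ∧ ∃ v : Fin k → ℝ, v ≠ 0 ∧ (∀ i, 0 ≤ v i) ∧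
        Δ.mulVec v = μ • v) →
      ∃ p : Fin k → ℝ, (∀ i, 0 < p i) ∧ ∑ i, p i = 1 ∧
        ((PT (outer (psiS p)) * ρ).trace).re < 0) := by
  -- the key trace formula
  have key : ∀ p : Fin k → ℝ,
      ((PT (outer (psiS p)) * ρ).trace).re
        = ∑ i, ∑ j, Real.sqrt (p i) * Real.sqrt (p j) * Δ i j := by
    intro p
    set f : Fin k → ℝ := fun i => Real.sqrt (p i) with hf
    have h1 : (PT (outer (psiS p)) * ρ).trace
        = ∑ i, ∑ j, ((f i : ℂ) * (f j : ℂ)) * ρ (j, i) (i, j) := by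
      rw [Matrix.trace]
      simp only [Matrix.diag, Matrix.mul_apply, PT, outer, psiS, Fintype.sum_prod_type,
        ite_mul, mul_ite, zero_mul, mul_zero, apply_ite (starRingEnd ℂ), map_zero,
        RCLike.star_def, Complex.conj_ofReal]
      simp [Finset.sum_ite_irrel, Finset.sum_const_zero, Finset.sum_ite_eq,
        Finset.sum_ite_eq']
      rfl
    rw [h1]
    have h2 : (∑ i, ∑ j, ((f i : ℂ) * (f j : ℂ)) * ρ (j, i) (i, j)).re
        = ∑ i, ∑ j, f i * f j * (ρ (j, i) (i, j)).re := by
      rw [Complex.re_sum]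
      refine Finset.sum_congr rfl fun i _ => ?_
      rw [Complex.re_sum]
      refine Finset.sum_congr rfl fun j _ => ?_
      rw [← Complex.ofReal_mul, Complex.re_ofReal_mul]
    rw [h2]
    have h3 : ∀ i j : Fin k, (ρ (i, j) (j, i)).re + (ρ (j, i) (i, j)).re = 2 * Δ i j := by
      intro i j
      rw [hΔ i j]
      simp [Complex.add_re, Complex.mul_re]
    have swap : ∑ i, ∑ j, f i * f j * (ρ (j,i) (i,j)).re
        = ∑ i, ∑ j, f i * f j * (ρ (i,j) (j,i)).re := by
      rw [Finset.sum_comm]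
      exact Finset.sum_congr rfl fun i _ => Finset.sum_congr rfl fun j _ => by ring
    have h4 : (2:ℝ) * (∑ i, ∑ j, f i * f j * (ρ (j,i) (i,j)).re)
        = 2 * ∑ i, ∑ j, f i * f j * Δ i j := by
      rw [two_mul]
      nth_rewrite 2 [swap]
      rw [← Finset.sum_add_distrib]
      rw [Finset.mul_sum]
      refine Finset.sum_congr rfl fun i _ => ?_
      rw [← Finset.sum_add_distrib, Finset.mul_sum]
      refine Finset.sum_congr rfl fun j _ => ?_
      rw [← mul_add, add_comm ((ρ (j, i) (i, j)).re), h3 i j]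
      ring
    linarith
  constructor
  · -- PosSemidef direction
    intro hpos p hp hsum
    rw [key p]
    set f : Fin k → ℝ := fun i => Real.sqrt (p i) with hf
    have heq : (star f) ⬝ᵥ Δ.mulVec f = ∑ i, ∑ j, f i * f j * Δ i j := by
      simp only [star_trivial, dotProduct, Matrix.mulVec, Finset.mul_sum]
      exact Finset.sum_congr rfl fun i _ => Finset.sum_congr rfl fun j _ => by ring
    rw [← heq]
    exact hpos.dotProduct_mulVec_nonneg f
  · -- negative eigenvalue direction
    rintro ⟨μ, hμ, v, hv0, hvnn, heig⟩
    set q : (Fin k → ℝ) → ℝ := fun w => ∑ i, ∑ j, w i * w j * Δ i j with hq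
    obtain ⟨i₀, hi₀⟩ := Function.ne_iff.mp hv0
    have hvsq : 0 < ∑ i, v i ^ 2 :=
      Finset.sum_pos' (fun j _ => sq_nonneg _) ⟨i₀, Finset.mem_univ i₀, pow_pos ((hvnn i₀).lt_of_ne (Ne.symm (by simpa using hi₀))) 2⟩
    have hmv : ∀ i, ∑ j, Δ i j * v j = μ * v i := by
      intro i
      have := congrFun heig i
      simpa [Matrix.mulVec, dotProduct] using this
    have hq0 : q v = μ * ∑ i, v i ^ 2 := by
      simp only [hq]
      calc ∑ i, ∑ j, v i * v j * Δ i j = ∑ i, v i * (∑ j, Δ i j * v j) := by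
            refine Finset.sum_congr rfl fun i _ => ?_
            rw [Finset.mul_sum]
            exact Finset.sum_congr rfl fun j _ => by ring
        _ = ∑ i, v i * (μ * v i) := by
            exact Finset.sum_congr rfl fun i _ => by rw [hmv i]
        _ = μ * ∑ i, v i ^ 2 := by
            rw [Finset.mul_sum]
            exact Finset.sum_congr rfl fun i _ => by ring
    have hqv : q v < 0 := by
      rw [hq0]; exact mul_neg_of_neg_of_pos hμ hvsq
    have hcont : Continuous fun ε : ℝ => q (fun i => v i + ε) := by
      simp only [hq]
      apply continuous_finset_sum
      intro i _
      apply continuous_finset_sum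
      intro j _
      fun_prop
    have h0 : q (fun i => v i + 0) < 0 := by simpa using hqv
    have hev : ∀ᶠ ε in nhds (0:ℝ), q (fun i => v i + ε) < 0 :=
      (hcont.continuousAt (x := 0)) (Iio_mem_nhds h0)
    obtain ⟨ε, hεq, hεpos⟩ :=
      ((hev.filter_mono nhdsWithin_le_nhds).and self_mem_nhdsWithin).exists
        (f := nhdsWithin (0:ℝ) (Set.Ioi 0))
    set w : Fin k → ℝ := fun i => v i + ε with hw
    have hwpos : ∀ i, 0 < w i := fun i => add_pos_of_nonneg_of_pos (hvnn i) hεpos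
    set s : ℝ := ∑ i, w i ^ 2 with hs
    have hspos : 0 < s :=
      Finset.sum_pos (fun i _ => pow_pos (hwpos i) 2) ⟨i₀, Finset.mem_univ i₀⟩
    refine ⟨fun i => w i ^ 2 / s, fun i => div_pos (pow_pos (hwpos i) 2) hspos, ?_, ?_⟩
    · rw [← Finset.sum_div, ← hs, div_self hspos.ne']
    · rw [key]
      have hsqrt : ∀ i, Real.sqrt (w i ^ 2 / s) = w i / Real.sqrt s := by
        intro i
        rw [Real.sqrt_div (sq_nonneg _), Real.sqrt_sq (hwpos i).le]
      have hterm : ∀ a b c : ℝ, (a / Real.sqrt s) * (b / Real.sqrt s) * c = a * b * c / s := by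
        intro a b c
        rw [div_mul_div_comm, Real.mul_self_sqrt hspos.le]
        ring
      simp only [hsqrt, hterm, ← Finset.sum_div]
      exact div_neg_of_neg_of_pos hεq hspos
end

section
/- For any separable density matrix ρ on ℂ^d ⊗ ℂ^d and any pair of indices i ≠ j, one has ρ_{ii,ii} ρ_{jj,jj} ≥ (Re ρ_{ij,ji})^2 (every 2×2 principal minor of Δ_T(ρ) is nonnegative). -/
open Matrix ComplexOrder

theorem stmt19 (d : ℕ) (ρ : Matrix (Fin d × Fin d) (Fin d × Fin d) ℂ)
    (hρ : Separable ρ) (i j : Fin d) (hij : i ≠ j) :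
    ((ρ (i, j) (j, i)).re) ^ 2 ≤ (ρ (i, i) (i, i)).re * (ρ (j, j) (j, j)).re := by
  obtain ⟨n, p, a, b, hp, -, rfl⟩ := hρ
  set x : Fin n → ℂ := fun k => a k i * star (b k i) with hx
  set y : Fin n → ℂ := fun k => a k j * star (b k j) with hy
  have e1 : ((∑ k, (p k : ℂ) • prodState (a k) (b k)) (i, i) (i, i)).re
      = ∑ k, p k * Complex.normSq (x k) := by
    simp only [Matrix.sum_apply, Matrix.smul_apply, prodState, smul_eq_mul, Complex.re_sum]
    refine Finset.sum_congr rfl fun k _ => ?_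
    have : a k i * star (a k i) * (b k i * star (b k i))
        = (Complex.normSq (x k) : ℂ) := by
      rw [hx]
      simp only [Complex.star_def, Complex.mul_conj, Complex.normSq_mul, Complex.normSq_conj]
      push_cast
      ring
    rw [this]
    simp
  have e2 : ((∑ k, (p k : ℂ) • prodState (a k) (b k)) (j, j) (j, j)).re
      = ∑ k, p k * Complex.normSq (y k) := by
    simp only [Matrix.sum_apply, Matrix.smul_apply, prodState, smul_eq_mul, Complex.re_sum]
    refine Finset.sum_congr rfl fun k _ => ?_
    have : a k j * star (a k j) * (b k j * star (b k j))
        = (Complex.normSq (y k) : ℂ) := by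
      rw [hy]
      simp only [Complex.star_def, Complex.mul_conj, Complex.normSq_mul, Complex.normSq_conj]
      push_cast
      ring
    rw [this]
    simp
  have e3 : ((∑ k, (p k : ℂ) • prodState (a k) (b k)) (i, j) (j, i)).re
      = ∑ k, p k * (x k * star (y k)).re := by
    simp only [Matrix.sum_apply, Matrix.smul_apply, prodState, smul_eq_mul, Complex.re_sum]
    refine Finset.sum_congr rfl fun k _ => ?_
    have : a k i * star (a k j) * (b k j * star (b k i)) = x k * star (y k) := by
      rw [hx, hy]
      simp only [star_mul', star_star]
      ring
    rw [this]
    exact Complex.re_ofReal_mul _ _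
  rw [e1, e2, e3]
  have habs : |∑ k, p k * (x k * star (y k)).re|
      ≤ ∑ k, (Real.sqrt (p k) * ‖x k‖) * (Real.sqrt (p k) * ‖y k‖) := by
    refine (Finset.abs_sum_le_sum_abs _ _).trans (Finset.sum_le_sum fun k _ => ?_)
    rw [abs_mul, abs_of_nonneg (hp k)]
    have h1 : |(x k * star (y k)).re| ≤ ‖x k‖ * ‖y k‖ := by
      calc |(x k * star (y k)).re| ≤ ‖x k * star (y k)‖ :=
            Complex.abs_re_le_norm _
        _ = ‖x k‖ * ‖y k‖ := by rw [norm_mul]; simp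
    calc p k * |(x k * star (y k)).re| ≤ p k * (‖x k‖ * ‖y k‖) := by
          exact mul_le_mul_of_nonneg_left h1 (hp k)
      _ = (Real.sqrt (p k) * ‖x k‖) * (Real.sqrt (p k) * ‖y k‖) := by
          conv_lhs => rw [← Real.mul_self_sqrt (hp k)]
          ring
  calc (∑ k, p k * (x k * star (y k)).re) ^ 2
      = |∑ k, p k * (x k * star (y k)).re| ^ 2 := (sq_abs _).symm
    _ ≤ (∑ k, (Real.sqrt (p k) * ‖x k‖) * (Real.sqrt (p k) * ‖y k‖)) ^ 2 :=
        pow_le_pow_left₀ (abs_nonneg _) habs 2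
    _ ≤ (∑ k, p k * Complex.normSq (x k)) * (∑ k, p k * Complex.normSq (y k)) := by
        have := Finset.sum_mul_sq_le_sq_mul_sq Finset.univ
          (fun k => Real.sqrt (p k) * ‖x k‖)
          (fun k => Real.sqrt (p k) * ‖y k‖)
        refine this.trans_eq ?_
        congr 1 <;> refine Finset.sum_congr rfl fun k _ => ?_ <;>
          rw [mul_pow, Real.sq_sqrt (hp k), Complex.sq_norm]
end
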